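/- Let d ≥ 5. There exists a constant C > 0, depending only on d, such that for all u, v, y ∈ ℤ^d: Σ_{a,b∈ℤ^d} ⟨u−a⟩^{2−d} ⟨y−a⟩^{4−2d} ⟨b−a⟩^{2−d} ⟨v−b⟩^{4−2d} ⟨y−b⟩^{2−d} ≤ C ⟨y−u⟩^{2−d} ⟨y−v⟩^{4−2d}. -/

import Mathlib

/-!
Write `G x = ⟨x⟩^(2-d)`. Since `⟨x - y⟩ ≤ ⟨x - a⟩ + ⟨y - a⟩`, one of `⟨x - a⟩, ⟨y - a⟩` is at least
`⟨x - y⟩ / 2`, so `min (G (x - a)) (G (y - a)) ≤ 2^(d-2) G (x - y)`. A product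
`G (x - a) G (y - a)` can therefore be traded for `2^(d-2) G (x - y)` times the sum of its factors,
which removes one factor depending on the summation variable `a`. Doing this twice in the sum
over `a` (pulling out `⟨y - u⟩` and `⟨y - b⟩`) and once, squared, in the sum over `b` (pulling out
`⟨y - v⟩²`) leaves only sums of products of two translates of `G`, each at most `2 ∑ G²`; this is
finite because `2 (2 - d) < -d` for `d ≥ 5`. Summing in `ℝ≥0∞` avoids all summability side
conditions until the very end.
-/

open scoped BigOperators

/-- Euclidean norm of a point of `ℤ^d`. -/
noncomputable def znorm {d : ℕ} (x : Fin d → ℤ) : ℝ :=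
  Real.sqrt (∑ i, ((x i : ℝ)) ^ 2)

/-- `⟨x⟩ = max(|x|, 1)`. -/
noncomputable def zbra {d : ℕ} (x : Fin d → ℤ) : ℝ := max (znorm x) 1

open scoped ENNReal
open Finset

namespace ENNReal

theorem mul_le_sq_add_sq (a b : ℝ≥0∞) : a * b ≤ a ^ 2 + b ^ 2 := by
  rcases le_total a b with h | h
  · calc a * b ≤ b ^ 2 := by rw [sq]; gcongr
      _ ≤ a ^ 2 + b ^ 2 := le_add_self
  · calc a * b ≤ a ^ 2 := by rw [sq]; gcongr
      _ ≤ a ^ 2 + b ^ 2 := le_self_add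

theorem mul_pow_le_of_min_le {a b m : ℝ≥0∞} (h : min a b ≤ m) (k : ℕ) :
    (a * b) ^ k ≤ m ^ k * (a ^ k + b ^ k) := by
  rw [mul_pow, mul_add]
  rcases min_choice a b with hab | hab <;> rw [hab] at h
  · calc a ^ k * b ^ k ≤ m ^ k * b ^ k := by gcongr
      _ ≤ m ^ k * a ^ k + m ^ k * b ^ k := le_add_self
  · calc a ^ k * b ^ k ≤ m ^ k * a ^ k := by rw [mul_comm]; gcongr
      _ ≤ m ^ k * a ^ k + m ^ k * b ^ k := le_self_add

theorem mul_le_of_min_le {a b m : ℝ≥0∞} (h : min a b ≤ m) : a * b ≤ m * (a + b) := by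
  simpa using mul_pow_le_of_min_le h 1

theorem summable_toReal_and_tsum_le {ι : Type*} {f : ι → ℝ≥0∞} {B : ℝ≥0∞}
    (hB : B ≠ ∞) (h : ∑' i, f i ≤ B) :
    Summable (fun i => (f i).toReal) ∧ ∑' i, (f i).toReal ≤ B.toReal := by
  have hf : ∑' i, f i ≠ ∞ := ne_top_of_le_ne_top hB h
  refine ⟨ENNReal.summable_toReal hf, ?_⟩
  rw [← ENNReal.tsum_toReal_eq (ENNReal.ne_top_of_tsum_ne_top hf)]
  exact ENNReal.toReal_mono hB h

end ENNReal

section WeightConvolution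

open ENNReal

variable {A : Type*} [AddCommGroup A]

theorem tsum_sub_eq (f : A → ℝ≥0∞) (x : A) : ∑' a, f (x - a) = ∑' a, f a :=
  (Equiv.subLeft x).tsum_eq f

theorem tsum_mul_sub_le (G : A → ℝ≥0∞) (x y : A) :
    ∑' a, G (x - a) * G (y - a) ≤ 2 * ∑' a, G a ^ 2 := by
  calc ∑' a, G (x - a) * G (y - a) ≤ ∑' a, (G (x - a) ^ 2 + G (y - a) ^ 2) :=
        ENNReal.tsum_le_tsum fun a => mul_le_sq_add_sq _ _
    _ = 2 * ∑' a, G a ^ 2 := by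
        rw [ENNReal.tsum_add, tsum_sub_eq (G · ^ 2), tsum_sub_eq (G · ^ 2), two_mul]

variable {G : A → ℝ≥0∞} {c : ℝ≥0∞}

theorem tsum_sq_mul_le (hG : ∀ x y a, min (G (x - a)) (G (y - a)) ≤ c * G (x - y)) (y b : A) :
    ∑' a, G (y - a) ^ 2 * G (b - a) ≤ 3 * c * (∑' a, G a ^ 2) * G (y - b) := by
  calc ∑' a, G (y - a) ^ 2 * G (b - a)
      ≤ ∑' a, c * G (y - b) * (G (y - a) ^ 2 + G (y - a) * G (b - a)) :=
        ENNReal.tsum_le_tsum fun a => by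
          calc G (y - a) ^ 2 * G (b - a) = G (y - a) * (G (y - a) * G (b - a)) := by ring
            _ ≤ G (y - a) * (c * G (y - b) * (G (y - a) + G (b - a))) := by
                gcongr G (y - a) * ?_; exact mul_le_of_min_le (hG y b a)
            _ = _ := by ring
    _ = c * G (y - b) * (∑' a, G (y - a) ^ 2 + ∑' a, G (y - a) * G (b - a)) := by
        rw [ENNReal.tsum_mul_left, ENNReal.tsum_add]
    _ ≤ c * G (y - b) * (∑' a, G a ^ 2 + 2 * ∑' a, G a ^ 2) := by
        rw [tsum_sub_eq (G · ^ 2)]; gcongr; exact tsum_mul_sub_le G y b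
    _ = 3 * c * (∑' a, G a ^ 2) * G (y - b) := by ring

theorem tsum_mul_sq_mul_le (hG : ∀ x y a, min (G (x - a)) (G (y - a)) ≤ c * G (x - y))
    (u y b : A) :
    ∑' a, G (u - a) * G (y - a) ^ 2 * G (b - a)
      ≤ 7 * c ^ 2 * (∑' a, G a ^ 2) * G (y - u) * G (y - b) := by
  set S := ∑' a, G a ^ 2
  calc ∑' a, G (u - a) * G (y - a) ^ 2 * G (b - a)
      ≤ ∑' a, c * G (y - u) * (G (y - a) ^ 2 * G (b - a)
          + c * G (y - b) * (G (u - a) * G (y - a) + G (u - a) * G (b - a))) :=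
        ENNReal.tsum_le_tsum fun a => by
          calc G (u - a) * G (y - a) ^ 2 * G (b - a)
              = (G (y - a) * G (u - a)) * (G (y - a) * G (b - a)) := by ring
            _ ≤ (c * G (y - u) * (G (y - a) + G (u - a))) * (G (y - a) * G (b - a)) := by
                gcongr ?_ * _; exact mul_le_of_min_le (hG y u a)
            _ = c * G (y - u) * (G (y - a) ^ 2 * G (b - a)
                  + G (u - a) * (G (y - a) * G (b - a))) := by ring
            _ ≤ c * G (y - u) * (G (y - a) ^ 2 * G (b - a)
                  + G (u - a) * (c * G (y - b) * (G (y - a) + G (b - a)))) := by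
                gcongr _ * (_ + G (u - a) * ?_); exact mul_le_of_min_le (hG y b a)
            _ = _ := by ring
    _ = c * G (y - u) * (∑' a, G (y - a) ^ 2 * G (b - a)
          + c * G (y - b) * (∑' a, G (u - a) * G (y - a) + ∑' a, G (u - a) * G (b - a))) := by
        simp only [ENNReal.tsum_mul_left, ENNReal.tsum_add]
    _ ≤ c * G (y - u) * (3 * c * S * G (y - b) + c * G (y - b) * (2 * S + 2 * S)) := by
        gcongr
        exacts [tsum_sq_mul_le hG y b, tsum_mul_sub_le G u y, tsum_mul_sub_le G u b]
    _ = 7 * c ^ 2 * S * G (y - u) * G (y - b) := by ring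

theorem tsum_sq_mul_sq_le (hG : ∀ x y a, min (G (x - a)) (G (y - a)) ≤ c * G (x - y))
    (v y : A) :
    ∑' b, G (v - b) ^ 2 * G (y - b) ^ 2 ≤ 2 * c ^ 2 * (∑' a, G a ^ 2) * G (y - v) ^ 2 := by
  calc ∑' b, G (v - b) ^ 2 * G (y - b) ^ 2
      ≤ ∑' b, (c * G (y - v)) ^ 2 * (G (y - b) ^ 2 + G (v - b) ^ 2) :=
        ENNReal.tsum_le_tsum fun b => by
          rw [← mul_pow, mul_comm]; exact mul_pow_le_of_min_le (hG y v b) 2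
    _ = 2 * c ^ 2 * (∑' a, G a ^ 2) * G (y - v) ^ 2 := by
        rw [ENNReal.tsum_mul_left, ENNReal.tsum_add, tsum_sub_eq (G · ^ 2),
          tsum_sub_eq (G · ^ 2)]
        ring

theorem tsum_prod_two_loop_le (hG : ∀ x y a, min (G (x - a)) (G (y - a)) ≤ c * G (x - y))
    (u v y : A) :
    ∑' p : A × A, G (u - p.1) * G (y - p.1) ^ 2 * G (p.2 - p.1) * G (v - p.2) ^ 2 * G (y - p.2)
      ≤ 14 * c ^ 4 * (∑' a, G a ^ 2) ^ 2 * G (y - u) * G (y - v) ^ 2 := by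
  set S := ∑' a, G a ^ 2
  calc ∑' p : A × A, G (u - p.1) * G (y - p.1) ^ 2 * G (p.2 - p.1) * G (v - p.2) ^ 2 * G (y - p.2)
      = ∑' b, (∑' a, G (u - a) * G (y - a) ^ 2 * G (b - a)) * (G (v - b) ^ 2 * G (y - b)) := by
        rw [ENNReal.tsum_prod', ENNReal.tsum_comm]
        simp only [← ENNReal.tsum_mul_right, mul_assoc]
    _ ≤ ∑' b, (7 * c ^ 2 * S * G (y - u) * G (y - b)) * (G (v - b) ^ 2 * G (y - b)) := by
        gcongr with b; exact tsum_mul_sq_mul_le hG u y b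
    _ = 7 * c ^ 2 * S * G (y - u) * ∑' b, G (v - b) ^ 2 * G (y - b) ^ 2 := by
        rw [← ENNReal.tsum_mul_left (a := 7 * c ^ 2 * S * G (y - u))]
        exact tsum_congr fun b => by ring
    _ ≤ 7 * c ^ 2 * S * G (y - u) * (2 * c ^ 2 * S * G (y - v) ^ 2) := by
        gcongr; exact tsum_sq_mul_sq_le hG v y
    _ = 14 * c ^ 4 * S ^ 2 * G (y - u) * G (y - v) ^ 2 := by ring

end WeightConvolution

theorem summable_pi_prod {ι κ : Type*} [Fintype ι] {f : κ → ℝ} (hf₀ : 0 ≤ f)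
    (hf : Summable f) : Summable fun x : ι → κ => ∏ i, f (x i) := by
  classical
  refine summable_of_sum_le (c := ∏ _i : ι, ∑' k, f k)
    (fun x => prod_nonneg fun i _ => hf₀ _) fun s => ?_
  calc ∑ x ∈ s, ∏ i, f (x i)
      ≤ ∑ x ∈ Fintype.piFinset fun i => s.image (· i), ∏ i, f (x i) :=
        sum_le_sum_of_subset_of_nonneg
          (fun x hx => Fintype.mem_piFinset.2 fun i => mem_image_of_mem _ hx)
          (fun x _ _ => prod_nonneg fun i _ => hf₀ _)
    _ = ∏ i, ∑ k ∈ s.image (· i), f k := (prod_univ_sum _ _).symm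
    _ ≤ ∏ _i : ι, ∑' k, f k :=
        prod_le_prod (fun i _ => sum_nonneg fun k _ => hf₀ k)
          fun i _ => hf.sum_le_tsum _ fun k _ => hf₀ k

theorem summable_max_abs_one_rpow {t : ℝ} (ht : t < -1) :
    Summable fun n : ℤ => max |(n : ℝ)| 1 ^ t := by
  have h := (Real.summable_abs_int_rpow (b := -t) (by linarith)).update 0 1
  refine h.congr fun n => ?_
  rcases eq_or_ne n 0 with rfl | hn
  · simp
  · have : 1 ≤ |(n : ℝ)| := by exact_mod_cast Int.one_le_abs hn
    simp [hn, max_eq_left this]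

section Zbra

variable {d : ℕ}

theorem zbra_pos (x : Fin d → ℤ) : 0 < zbra x := one_pos.trans_le (le_max_right _ _)

def euclideanCast (x : Fin d → ℤ) : EuclideanSpace ℝ (Fin d) := WithLp.toLp 2 fun i => (x i : ℝ)

theorem euclideanCast_sub (x y : Fin d → ℤ) :
    euclideanCast (x - y) = euclideanCast x - euclideanCast y := by
  ext i; simp [euclideanCast]

theorem zbra_eq_max_norm (x : Fin d → ℤ) : zbra x = max ‖euclideanCast x‖ 1 := by
  simp [zbra, znorm, euclideanCast, EuclideanSpace.norm_eq]

theorem zbra_sub_le (x y a : Fin d → ℤ) : zbra (x - y) ≤ zbra (x - a) + zbra (y - a) := by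
  have h : euclideanCast (x - y) = euclideanCast (x - a) - euclideanCast (y - a) := by
    simp only [euclideanCast_sub]; abel
  simp only [zbra_eq_max_norm, h]
  refine max_le ((norm_sub_le _ _).trans (add_le_add (le_max_left _ _) (le_max_left _ _))) ?_
  linarith [le_max_right ‖euclideanCast (x - a)‖ 1, le_max_right ‖euclideanCast (y - a)‖ 1]

theorem max_abs_le_zbra (x : Fin d → ℤ) (i : Fin d) : max |(x i : ℝ)| 1 ≤ zbra x := by
  rw [zbra_eq_max_norm]
  gcongr
  simpa [euclideanCast] using PiLp.norm_apply_le (euclideanCast x) i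

theorem zbra_rpow_le_prod (hd : d ≠ 0) {s : ℝ} (hs : s ≤ 0) (x : Fin d → ℤ) :
    zbra x ^ s ≤ ∏ i, max |(x i : ℝ)| 1 ^ (s / d) := by
  have hprod : ∏ i, max |(x i : ℝ)| 1 ≤ zbra x ^ (d : ℝ) := by
    rw [Real.rpow_natCast]
    calc ∏ i, max |(x i : ℝ)| 1 ≤ ∏ _i : Fin d, zbra x :=
          prod_le_prod (fun i _ => by positivity) fun i _ => max_abs_le_zbra x i
      _ = zbra x ^ d := by simp
  calc zbra x ^ s = (zbra x ^ (d : ℝ)) ^ (s / d) := by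
        rw [← Real.rpow_mul (zbra_pos x).le, mul_div_cancel₀ _ (Nat.cast_ne_zero.2 hd)]
    _ ≤ (∏ i, max |(x i : ℝ)| 1) ^ (s / d) :=
        Real.rpow_le_rpow_of_nonpos (prod_pos fun i _ => by positivity) hprod
          (div_nonpos_of_nonpos_of_nonneg hs d.cast_nonneg)
    _ = ∏ i, max |(x i : ℝ)| 1 ^ (s / d) :=
        (Real.finsetProd_rpow _ _ (fun i _ => by positivity) _).symm

theorem summable_zbra_rpow {s : ℝ} (hs : s < -d) : Summable fun x : Fin d → ℤ => zbra x ^ s := by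
  rcases eq_or_ne d 0 with rfl | hd
  · exact .of_finite
  have hd' : (0 : ℝ) < d := by positivity
  have ht : s / d < -1 := by rwa [div_lt_iff₀ hd', neg_one_mul]
  exact (summable_pi_prod (fun n => by positivity) (summable_max_abs_one_rpow ht)).of_nonneg_of_le
    (fun x => (Real.rpow_pos_of_pos (zbra_pos x) s).le) (zbra_rpow_le_prod hd (by linarith))

theorem rpow_le_two_rpow_neg_mul_of_le_two_mul {r w q : ℝ} (hr : 0 < r) (hw : r ≤ 2 * w)
    (hq : q ≤ 0) : w ^ q ≤ 2 ^ (-q) * r ^ q := by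
  calc w ^ q ≤ (r / 2) ^ q := Real.rpow_le_rpow_of_nonpos (by positivity) (by linarith) hq
    _ = 2 ^ (-q) * r ^ q := by
        rw [Real.div_rpow hr.le zero_le_two, Real.rpow_neg zero_le_two, div_eq_inv_mul]

theorem min_zbra_rpow_le {q : ℝ} (hq : q ≤ 0) (x y a : Fin d → ℤ) :
    min (zbra (x - a) ^ q) (zbra (y - a) ^ q) ≤ 2 ^ (-q) * zbra (x - y) ^ q := by
  have htri := zbra_sub_le x y a
  rcases le_total (zbra (x - a)) (zbra (y - a)) with h | h
  · exact (min_le_right _ _).trans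
      (rpow_le_two_rpow_neg_mul_of_le_two_mul (zbra_pos _) (by linarith) hq)
  · exact (min_le_left _ _).trans
      (rpow_le_two_rpow_neg_mul_of_le_two_mul (zbra_pos _) (by linarith) hq)

theorem zbra_rpow_nonneg (q : ℝ) (x : Fin d → ℤ) : 0 ≤ zbra x ^ q :=
  Real.rpow_nonneg (zbra_pos x).le q

theorem zbra_rpow_two_mul (q : ℝ) (x : Fin d → ℤ) : zbra x ^ (2 * q) = (zbra x ^ q) ^ 2 := by
  rw [mul_comm, Real.rpow_mul (zbra_pos x).le, Real.rpow_two]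

noncomputable def zweight (q : ℝ) (x : Fin d → ℤ) : ℝ≥0∞ := ENNReal.ofReal (zbra x ^ q)

theorem zweight_ne_zero (q : ℝ) (x : Fin d → ℤ) : zweight q x ≠ 0 := by
  simpa [zweight] using Real.rpow_pos_of_pos (zbra_pos x) q

theorem zweight_ne_top (q : ℝ) (x : Fin d → ℤ) : zweight q x ≠ ∞ := ENNReal.ofReal_ne_top

theorem min_zweight_le {q : ℝ} (hq : q ≤ 0) (x y a : Fin d → ℤ) :
    min (zweight q (x - a)) (zweight q (y - a))
      ≤ ENNReal.ofReal (2 ^ (-q)) * zweight q (x - y) := by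
  rw [zweight, zweight, zweight, ← ENNReal.ofReal_min, ← ENNReal.ofReal_mul (by positivity)]
  exact ENNReal.ofReal_le_ofReal (min_zbra_rpow_le hq x y a)

theorem tsum_zweight_sq_ne_top {q : ℝ} (hq : 2 * q < -d) :
    ∑' x : Fin d → ℤ, zweight q x ^ 2 ≠ ∞ := by
  have hsum := summable_zbra_rpow hq
  simp_rw [zweight, ← ENNReal.ofReal_pow (Real.rpow_nonneg (zbra_pos _).le _), ← zbra_rpow_two_mul,
    ← ENNReal.ofReal_tsum_of_nonneg (fun x => Real.rpow_nonneg (zbra_pos x).le _) hsum]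
  exact ENNReal.ofReal_ne_top

end Zbra

/-- For `d ≥ 5` there is `C > 0`, depending only on `d`, such that for all
`u, v, y ∈ ℤ^d`:
`Σ_{a,b} ⟨u−a⟩^{2−d}⟨y−a⟩^{4−2d}⟨b−a⟩^{2−d}⟨v−b⟩^{4−2d}⟨y−b⟩^{2−d}
  ≤ C ⟨y−u⟩^{2−d} ⟨y−v⟩^{4−2d}`. -/
theorem stmt_12 (d : ℕ) (hd : 5 ≤ d) :
    ∃ C > (0 : ℝ), ∀ u v y : Fin d → ℤ,
      Summable (fun p : (Fin d → ℤ) × (Fin d → ℤ) =>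
        zbra (u - p.1) ^ ((2 : ℝ) - d) * zbra (y - p.1) ^ ((4 : ℝ) - 2 * d) *
          zbra (p.2 - p.1) ^ ((2 : ℝ) - d) * zbra (v - p.2) ^ ((4 : ℝ) - 2 * d) *
          zbra (y - p.2) ^ ((2 : ℝ) - d)) ∧
      (∑' p : (Fin d → ℤ) × (Fin d → ℤ),
        zbra (u - p.1) ^ ((2 : ℝ) - d) * zbra (y - p.1) ^ ((4 : ℝ) - 2 * d) *
          zbra (p.2 - p.1) ^ ((2 : ℝ) - d) * zbra (v - p.2) ^ ((4 : ℝ) - 2 * d) *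
          zbra (y - p.2) ^ ((2 : ℝ) - d))
        ≤ C * zbra (y - u) ^ ((2 : ℝ) - d) * zbra (y - v) ^ ((4 : ℝ) - 2 * d) := by
  have hd_real : (5 : ℝ) ≤ d := by exact_mod_cast hd
  set q : ℝ := 2 - d
  have hq : q ≤ 0 := by linarith
  have hS := tsum_zweight_sq_ne_top (d := d) (q := q) (by linarith)
  refine ⟨(14 * ENNReal.ofReal (2 ^ (-q)) ^ 4 * (∑' x, zweight q x ^ 2) ^ 2).toReal,
    ENNReal.toReal_pos (by simp [zweight_ne_zero, Real.rpow_pos_of_pos]) (by finiteness),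
    fun u v y => ?_⟩
  rw [show (4 : ℝ) - 2 * d = 2 * q by ring]
  have key := tsum_prod_two_loop_le (min_zweight_le hq) u v y
  simpa [zweight, ENNReal.toReal_mul, ENNReal.toReal_pow, ENNReal.toReal_ofReal, zbra_rpow_nonneg,
    zbra_rpow_two_mul] using ENNReal.summable_toReal_and_tsum_le
      (by simp [ENNReal.mul_eq_top, hS, zweight_ne_top]) key
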